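/- Let H be a class of functions h : Z → [0,1] and f : Z → [0,1] a fixed function. Suppose f is λ-close to H with respect to distributions S and T, i.e., inf_{h∈H}[ε_S(h,f) + ε_T(h,f)] ≤ λ, where ε_D(h,f) = E_{z∼D}|h(z) − f(z)|. Then for any h ∈ H and any h* ∈ H achieving ε_S(h*,f) + ε_T(h*,f) ≤ λ, the target error satisfies ε_T(h, f) ≤ λ + ε_S(h, f) + |ε_T(h*, h) − ε_S(h*, h)|. -/

import Mathlib

open MeasureTheory

section L1Distance

variable {Z : Type*} [MeasurableSpace Z] (μ : Measure Z)

lemma integrable_abs_sub_of_mem_Icc [IsFiniteMeasure μ] (a b : ℝ) {g₁ g₂ : Z → ℝ}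
    (hg₁ : Measurable g₁) (hg₂ : Measurable g₂)
    (hb₁ : ∀ z, g₁ z ∈ Set.Icc a b) (hb₂ : ∀ z, g₂ z ∈ Set.Icc a b) :
    Integrable (fun z => |g₁ z - g₂ z|) μ :=
  ((Integrable.of_mem_Icc a b hg₁.aemeasurable (ae_of_all _ hb₁)).sub
    (Integrable.of_mem_Icc a b hg₂.aemeasurable (ae_of_all _ hb₂))).abs

lemma integral_abs_sub_comm (g₁ g₂ : Z → ℝ) :
    ∫ z, |g₁ z - g₂ z| ∂μ = ∫ z, |g₂ z - g₁ z| ∂μ := by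
  simp_rw [abs_sub_comm]

lemma integral_abs_sub_le_add {g₁ g₂ g₃ : Z → ℝ}
    (h₁₂ : Integrable (fun z => |g₁ z - g₂ z|) μ) (h₂₃ : Integrable (fun z => |g₂ z - g₃ z|) μ) :
    ∫ z, |g₁ z - g₃ z| ∂μ ≤ ∫ z, |g₁ z - g₂ z| ∂μ + ∫ z, |g₂ z - g₃ z| ∂μ := by
  rw [← integral_add h₁₂ h₂₃]
  exact integral_mono_of_nonneg (ae_of_all _ fun _ => abs_nonneg _) (h₁₂.add h₂₃)
    (ae_of_all _ fun _ => abs_sub_le _ _ _)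

end L1Distance

/-- If `f` is `λ`-close to the class `H` (witnessed by `h⋆ ∈ H`), then for any `h ∈ H` the
target error satisfies `ε_T(h,f) ≤ λ + ε_S(h,f) + |ε_T(h⋆,h) − ε_S(h⋆,h)|`. -/
theorem stmt_10 {Z : Type*} [MeasurableSpace Z]
    (S T : Measure Z) [IsProbabilityMeasure S] [IsProbabilityMeasure T]
    (H : Set (Z → ℝ)) (f : Z → ℝ) (lam : ℝ)
    (hmf : Measurable f) (hbf : ∀ z, f z ∈ Set.Icc (0 : ℝ) 1)
    (hmH : ∀ h ∈ H, Measurable h) (hbH : ∀ h ∈ H, ∀ z, h z ∈ Set.Icc (0 : ℝ) 1)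
    (h hstar : Z → ℝ) (hh : h ∈ H) (hhstar : hstar ∈ H)
    (hclose : (∫ z, |hstar z - f z| ∂S) + (∫ z, |hstar z - f z| ∂T) ≤ lam) :
    ∫ z, |h z - f z| ∂T ≤
      lam + ∫ z, |h z - f z| ∂S +
        |(∫ z, |hstar z - h z| ∂T) - (∫ z, |hstar z - h z| ∂S)| := by
  have integrable := fun (μ : Measure Z) [IsProbabilityMeasure μ] {g₁ g₂ : Z → ℝ}
      (hg₁ : Measurable g₁ ∧ ∀ z, g₁ z ∈ Set.Icc (0 : ℝ) 1)
      (hg₂ : Measurable g₂ ∧ ∀ z, g₂ z ∈ Set.Icc (0 : ℝ) 1) =>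
    integrable_abs_sub_of_mem_Icc μ 0 1 hg₁.1 hg₂.1 hg₁.2 hg₂.2
  have f_reg := And.intro hmf hbf
  have h_reg := And.intro (hmH h hh) (hbH h hh)
  have hstar_reg := And.intro (hmH hstar hhstar) (hbH hstar hhstar)
  have target_triangle :=
    integral_abs_sub_le_add T (integrable T h_reg hstar_reg) (integrable T hstar_reg f_reg)
  have source_triangle :=
    integral_abs_sub_le_add S (integrable S hstar_reg f_reg) (integrable S f_reg h_reg)
  rw [integral_abs_sub_comm T h hstar] at target_triangle
  rw [integral_abs_sub_comm S f h] at source_triangle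
  linarith [le_abs_self ((∫ z, |hstar z - h z| ∂T) - ∫ z, |hstar z - h z| ∂S)]
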